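/- With T* as above, for all μ and μ' with ‖μ - μ'‖_∞ ≤ √(σ²/(2 T*(μ))), one has T*(μ') ≤ 4 T*(μ), and consequently |ln T*(μ') - ln T*(μ)| ≤ √(8 T*(μ)/σ²)·‖μ - μ'‖_∞. -/

import Mathlib

/-!
For fixed weights `w`, the square root of `∑ i, w i * (μ i - λ i) ^ 2 / (2σ²)` is a weighted
Euclidean seminorm of `μ - λ` divided by `√(2σ²)`, so it moves by at most
`d := ‖μ - μ'‖_∞ / √(2σ²)` when `μ` is replaced by `μ'`. The alternative-set property lets the
infimum over `λ` follow: either both infima run over the same set, or `μ'` is itself an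
alternative of `μ` and the infimum for `μ` is already at most `d²`. Taking the supremum over `w`
gives `|√T*(μ)⁻¹ - √T*(μ')⁻¹| ≤ d`. The hypothesis on `‖μ - μ'‖_∞` says `d ≤ √T*(μ)⁻¹ / 2`, so
`√T*(μ')⁻¹ ≥ √T*(μ)⁻¹ / 2`, which gives the factor `4`; the logarithmic bound follows from
`log x - log y ≤ (x - y) / y` applied to the square roots.
-/

/-- `Tinv K σ2 Alt μ = (T*(μ))⁻¹ = sup_{w ∈ Δ_K} inf_{λ ∈ Alt μ} Σ_i w_i (μ_i - λ_i)²/(2σ²)`. -/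
noncomputable def Tinv (K : ℕ) (σ2 : ℝ) (Alt : (Fin K → ℝ) → Set (Fin K → ℝ))
    (μ : Fin K → ℝ) : ℝ :=
  sSup {x | ∃ w ∈ stdSimplex ℝ (Fin K), x =
    sInf {y | ∃ l ∈ Alt μ, y = ∑ i, w i * (μ i - l i) ^ 2 / (2 * σ2)}}

open Finset Real

section WeightedNorm

variable {ι : Type*} [Fintype ι]

lemma sqrt_sum_mul_add_sq_le {w : ι → ℝ} (hw : 0 ≤ w) (u v : ι → ℝ) :
    √(∑ i, w i * (u i + v i) ^ 2) ≤ √(∑ i, w i * u i ^ 2) + √(∑ i, w i * v i ^ 2) := by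
  have hsq (i : ι) (x : ℝ) : (√(w i) * x) ^ 2 = w i * x ^ 2 := by
    rw [mul_pow, sq_sqrt (hw i)]
  have h := norm_add_le (E := EuclideanSpace ℝ ι) (WithLp.toLp 2 fun i => √(w i) * u i)
    (WithLp.toLp 2 fun i => √(w i) * v i)
  simp only [EuclideanSpace.norm_eq, Real.norm_eq_abs, sq_abs, PiLp.add_apply, ← mul_add] at h
  simpa only [hsq] using h

lemma sum_mul_sq_le_sq_norm {w : ι → ℝ} (hw : w ∈ stdSimplex ℝ ι) (u : ι → ℝ) :
    ∑ i, w i * u i ^ 2 ≤ ‖u‖ ^ 2 :=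
  calc ∑ i, w i * u i ^ 2 ≤ ∑ i, w i * ‖u‖ ^ 2 := by
        refine sum_le_sum fun i _ => mul_le_mul_of_nonneg_left (sq_le_sq.2 ?_) (hw.1 i)
        rw [abs_norm, ← Real.norm_eq_abs]
        exact norm_le_pi_norm u i
    _ = ‖u‖ ^ 2 := by rw [← sum_mul, hw.2, one_mul]

end WeightedNorm

section WeightedKL

variable {ι : Type*} [Fintype ι] {σ2 : ℝ}

noncomputable def weightedKL (σ2 : ℝ) (w ν l : ι → ℝ) : ℝ :=
  ∑ i, w i * (ν i - l i) ^ 2 / (2 * σ2)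

-- `Tinv K σ2 Alt ν` unfolds to the supremum of `infWeightedKL σ2 Alt w ν` over the simplex.
noncomputable def infWeightedKL (σ2 : ℝ) (Alt : (ι → ℝ) → Set (ι → ℝ)) (w ν : ι → ℝ) : ℝ :=
  sInf {y | ∃ l ∈ Alt ν, y = weightedKL σ2 w ν l}

lemma weightedKL_nonneg {w : ι → ℝ} (hw : 0 ≤ w) (hσ2 : 0 ≤ σ2) (ν l : ι → ℝ) :
    0 ≤ weightedKL σ2 w ν l :=
  sum_nonneg fun i _ => div_nonneg (mul_nonneg (hw i) (sq_nonneg _)) (by positivity)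

lemma weightedKL_le_sq {w : ι → ℝ} (hw : w ∈ stdSimplex ℝ ι) (hσ2 : 0 ≤ σ2) (μ μ' : ι → ℝ) :
    weightedKL σ2 w μ μ' ≤ (‖μ - μ'‖ / √(2 * σ2)) ^ 2 := by
  rw [weightedKL, ← sum_div, div_pow, sq_sqrt (by positivity)]
  exact div_le_div_of_nonneg_right (sum_mul_sq_le_sq_norm hw (μ - μ')) (by positivity)

lemma sqrt_weightedKL_le_add {w : ι → ℝ} (hw : w ∈ stdSimplex ℝ ι) (hσ2 : 0 ≤ σ2)
    (μ μ' l : ι → ℝ) :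
    √(weightedKL σ2 w μ l) ≤ √(weightedKL σ2 w μ' l) + ‖μ - μ'‖ / √(2 * σ2) := by
  rw [weightedKL, weightedKL, ← sum_div, ← sum_div, sqrt_div' _ (by positivity),
    sqrt_div' _ (by positivity), ← add_div]
  refine div_le_div_of_nonneg_right ?_ (sqrt_nonneg _)
  have hsplit : ∀ i, μ i - l i = (μ' i - l i) + (μ i - μ' i) := fun i => by ring
  simp only [hsplit]
  refine (sqrt_sum_mul_add_sq_le hw.1 _ _).trans (add_le_add_right ?_ _)
  exact (sqrt_le_left (norm_nonneg _)).2 (sum_mul_sq_le_sq_norm hw (μ - μ'))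

variable {Alt : (ι → ℝ) → Set (ι → ℝ)}

lemma infWeightedKL_nonneg {w : ι → ℝ} (hw : 0 ≤ w) (hσ2 : 0 ≤ σ2) (ν : ι → ℝ) :
    0 ≤ infWeightedKL σ2 Alt w ν :=
  Real.sInf_nonneg fun _ ⟨l, _, hy⟩ => hy ▸ weightedKL_nonneg hw hσ2 ν l

lemma infWeightedKL_le {w : ι → ℝ} (hw : 0 ≤ w) (hσ2 : 0 ≤ σ2) {ν l : ι → ℝ}
    (hl : l ∈ Alt ν) : infWeightedKL σ2 Alt w ν ≤ weightedKL σ2 w ν l :=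
  csInf_le ⟨0, fun _ ⟨l', _, hy⟩ => hy ▸ weightedKL_nonneg hw hσ2 ν l'⟩ ⟨l, hl, rfl⟩

lemma sqrt_infWeightedKL_le_add {w : ι → ℝ} (hw : w ∈ stdSimplex ℝ ι) (hσ2 : 0 ≤ σ2)
    {μ μ' : ι → ℝ} (hAlt : Alt μ = Alt μ' ∨ μ' ∈ Alt μ) :
    √(infWeightedKL σ2 Alt w μ) ≤ √(infWeightedKL σ2 Alt w μ') + ‖μ - μ'‖ / √(2 * σ2) := by
  set d := ‖μ - μ'‖ / √(2 * σ2)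
  rcases hAlt with hEq | hmem
  · rcases (Alt μ').eq_empty_or_nonempty with hempty | ⟨l₀, hl₀⟩
    · have h0 : infWeightedKL σ2 Alt w μ = 0 := by simp [infWeightedKL, hEq, hempty]
      rw [h0, sqrt_zero]
      positivity
    rw [← sub_le_iff_le_add]
    rcases le_or_gt (√(infWeightedKL σ2 Alt w μ) - d) 0 with hle | hpos
    · exact hle.trans (sqrt_nonneg _)
    refine le_sqrt_of_sq_le (le_csInf ⟨_, l₀, hl₀, rfl⟩ ?_)
    rintro _ ⟨l, hl, rfl⟩
    have h := (sqrt_le_sqrt (infWeightedKL_le hw.1 hσ2 (hEq ▸ hl : l ∈ Alt μ))).trans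
      (sqrt_weightedKL_le_add hw hσ2 μ μ' l)
    calc (√(infWeightedKL σ2 Alt w μ) - d) ^ 2 ≤ √(weightedKL σ2 w μ' l) ^ 2 :=
          pow_le_pow_left₀ hpos.le (by linarith) 2
      _ = weightedKL σ2 w μ' l := sq_sqrt (weightedKL_nonneg hw.1 hσ2 _ _)
  · refine le_add_of_nonneg_of_le (sqrt_nonneg _) ((sqrt_le_left (by positivity)).2 ?_)
    exact (infWeightedKL_le hw.1 hσ2 hmem).trans (weightedKL_le_sq hw hσ2 μ μ')

end WeightedKL

section Tinv

variable {K : ℕ} {σ2 : ℝ} {Alt : (Fin K → ℝ) → Set (Fin K → ℝ)}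

lemma bddAbove_infWeightedKL (hσ2 : 0 ≤ σ2) (ν : Fin K → ℝ) :
    BddAbove {x | ∃ w ∈ stdSimplex ℝ (Fin K), x = infWeightedKL σ2 Alt w ν} := by
  rcases (Alt ν).eq_empty_or_nonempty with hempty | ⟨l, hl⟩
  · refine ⟨0, fun _ ⟨_, _, hx⟩ => ?_⟩
    simp [hx, infWeightedKL, hempty]
  · refine ⟨(‖ν - l‖ / √(2 * σ2)) ^ 2, fun _ ⟨w, hw, hx⟩ => ?_⟩
    exact hx ▸ (infWeightedKL_le hw.1 hσ2 hl).trans (weightedKL_le_sq hw hσ2 ν l)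

lemma infWeightedKL_le_Tinv {w : Fin K → ℝ} (hw : w ∈ stdSimplex ℝ (Fin K)) (hσ2 : 0 ≤ σ2)
    (ν : Fin K → ℝ) : infWeightedKL σ2 Alt w ν ≤ Tinv K σ2 Alt ν :=
  le_csSup (bddAbove_infWeightedKL hσ2 ν) ⟨w, hw, rfl⟩

lemma sqrt_Tinv_le_add (hσ2 : 0 ≤ σ2) {μ μ' : Fin K → ℝ} (hAlt : Alt μ = Alt μ' ∨ μ' ∈ Alt μ) :
    √(Tinv K σ2 Alt μ) ≤ √(Tinv K σ2 Alt μ') + ‖μ - μ'‖ / √(2 * σ2) := by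
  refine (sqrt_le_left (by positivity)).2 (Real.sSup_le ?_ (sq_nonneg _))
  rintro _ ⟨w, hw, rfl⟩
  refine (sqrt_le_left (by positivity)).1 ((sqrt_infWeightedKL_le_add hw hσ2 hAlt).trans ?_)
  gcongr
  exact infWeightedKL_le_Tinv hw hσ2 μ'

end Tinv

lemma log_sub_log_le_div {x y : ℝ} (hx : 0 < x) (hy : 0 < y) : log x - log y ≤ (x - y) / y := by
  rw [← log_div hx.ne' hy.ne', sub_div, div_self hy.ne']
  exact log_le_sub_one_of_pos (div_pos hx hy)

section SqrtPerturbation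

variable {a b d : ℝ} (ha : 0 < a) (hd : d ≤ √a / 2)
include ha hd

lemma inv_le_four_mul_inv_of_sqrt_le (h : √a ≤ √b + d) : b⁻¹ ≤ 4 * a⁻¹ := by
  have hb : √a / 2 ≤ √b := by linarith
  have hb4 : a / 4 ≤ b :=
    calc a / 4 = (√a / 2) ^ 2 := by rw [div_pow, sq_sqrt ha.le]; norm_num
      _ ≤ √b ^ 2 := pow_le_pow_left₀ (by positivity) hb 2
      _ = b := sq_sqrt (sqrt_pos.1 ((by positivity : 0 < √a / 2).trans_le hb)).le
  calc b⁻¹ ≤ (a / 4)⁻¹ := inv_anti₀ (by positivity) hb4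
    _ = 4 * a⁻¹ := by rw [inv_div, div_eq_mul_inv]

lemma abs_log_sub_log_le_of_abs_sqrt_sub_le (h : |√a - √b| ≤ d) :
    |log a - log b| ≤ 4 * d / √a := by
  obtain ⟨hab, hba⟩ := abs_sub_le_iff.1 h
  have hd0 : 0 ≤ d := (abs_nonneg _).trans h
  have hx : 0 < √a := sqrt_pos.2 ha
  have hy : √a / 2 ≤ √b := by linarith
  have hy0 : 0 < √b := by linarith
  have hb : 0 < b := sqrt_pos.1 hy0
  have hlog : log a - log b = 2 * (log √a - log √b) := by
    rw [log_sqrt ha.le, log_sqrt hb.le]; ring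
  have h1 : log √a - log √b ≤ 2 * d / √a :=
    calc log √a - log √b ≤ (√a - √b) / √b := log_sub_log_le_div hx hy0
      _ ≤ d / √b := by gcongr
      _ ≤ 2 * d / √a := by
        rw [div_le_div_iff₀ hy0 hx]; nlinarith
  have h2 : log √b - log √a ≤ 2 * d / √a :=
    calc log √b - log √a ≤ (√b - √a) / √a := log_sub_log_le_div hy0 hx
      _ ≤ 2 * d / √a := by gcongr; linarith
  rw [hlog, abs_le, show 4 * d / √a = 2 * (2 * d / √a) by ring]
  constructor <;> linarith

end SqrtPerturbation

lemma sqrt_div_two_mul_inv {σ2 a : ℝ} (hσ2 : 0 ≤ σ2) (ha : 0 < a) :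
    √(σ2 / (2 * a⁻¹)) = √a / 2 * √(2 * σ2) := by
  rw [sqrt_eq_iff_eq_sq (by positivity) (by positivity), mul_pow, div_pow, sq_sqrt ha.le,
    sq_sqrt (by positivity)]
  field_simp

lemma sqrt_eight_mul_inv_div {σ2 a : ℝ} (hσ2 : 0 < σ2) (ha : 0 < a) :
    √(8 * a⁻¹ / σ2) = 4 / (√(2 * σ2) * √a) := by
  rw [sqrt_eq_iff_eq_sq (by positivity) (by positivity), div_pow, mul_pow,
    sq_sqrt ha.le, sq_sqrt (by positivity)]
  field_simp
  ring

theorem stmt_8_general (K : ℕ) (σ2 : ℝ) (hσ2 : 0 < σ2)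
    (Alt : (Fin K → ℝ) → Set (Fin K → ℝ))
    (hAlt : ∀ μ μ' : Fin K → ℝ, Alt μ = Alt μ' ∨ μ' ∈ Alt μ)
    (μ μ' : Fin K → ℝ)
    (hpos : 0 < Tinv K σ2 Alt μ)
    (hdist : ‖μ - μ'‖ ≤ Real.sqrt (σ2 / (2 * (Tinv K σ2 Alt μ)⁻¹))) :
    (Tinv K σ2 Alt μ')⁻¹ ≤ 4 * (Tinv K σ2 Alt μ)⁻¹ ∧
      |Real.log (Tinv K σ2 Alt μ')⁻¹ - Real.log (Tinv K σ2 Alt μ)⁻¹| ≤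
        Real.sqrt (8 * (Tinv K σ2 Alt μ)⁻¹ / σ2) * ‖μ - μ'‖ := by
  set a := Tinv K σ2 Alt μ
  set b := Tinv K σ2 Alt μ'
  set d := ‖μ - μ'‖ / √(2 * σ2)
  have hab : √a ≤ √b + d := sqrt_Tinv_le_add hσ2.le (hAlt μ μ')
  have hba : √b ≤ √a + d := by
    simpa only [d, norm_sub_rev] using sqrt_Tinv_le_add (K := K) hσ2.le (hAlt μ' μ)
  have hd : d ≤ √a / 2 := by
    rwa [div_le_iff₀ (sqrt_pos.2 (by positivity)), ← sqrt_div_two_mul_inv hσ2.le hpos]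
  have hrate : √(8 * a⁻¹ / σ2) * ‖μ - μ'‖ = 4 * d / √a := by
    rw [sqrt_eight_mul_inv_div hσ2 hpos]
    simp only [d]
    field_simp
  refine ⟨inv_le_four_mul_inv_of_sqrt_le hpos hd hab, ?_⟩
  rw [log_inv, log_inv, neg_sub_neg, hrate]
  exact abs_log_sub_log_le_of_abs_sqrt_sub_le hpos hd (abs_sub_le_iff.2 ⟨by linarith, by linarith⟩)

/-- If `‖μ - μ'‖_∞ ≤ √(σ²/(2 T*(μ)))` then `T*(μ') ≤ 4 T*(μ)` and
`|ln T*(μ') - ln T*(μ)| ≤ √(8 T*(μ)/σ²) ‖μ - μ'‖_∞`. -/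
theorem stmt_8 (K : ℕ) (σ2 : ℝ) (hσ2 : 0 < σ2)
    (Alt : (Fin K → ℝ) → Set (Fin K → ℝ))
    (hAlt : ∀ μ μ' : Fin K → ℝ, Alt μ = Alt μ' ∨ μ' ∈ Alt μ)
    (μ μ' : Fin K → ℝ) (h1 : (Alt μ).Nonempty) (h2 : (Alt μ').Nonempty)
    (hpos : 0 < Tinv K σ2 Alt μ) (hpos' : 0 < Tinv K σ2 Alt μ')
    (hdist : ‖μ - μ'‖ ≤ Real.sqrt (σ2 / (2 * (Tinv K σ2 Alt μ)⁻¹))) :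
    (Tinv K σ2 Alt μ')⁻¹ ≤ 4 * (Tinv K σ2 Alt μ)⁻¹ ∧
      |Real.log (Tinv K σ2 Alt μ')⁻¹ - Real.log (Tinv K σ2 Alt μ)⁻¹| ≤
        Real.sqrt (8 * (Tinv K σ2 Alt μ)⁻¹ / σ2) * ‖μ - μ'‖ :=
  stmt_8_general K σ2 hσ2 Alt hAlt μ μ' hpos hdist
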